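/- Let P_3 be the path with vertices 1,2,3 and edges {1,2},{2,3}, and let C_4 be the cycle with vertices 1,2,3,4 and edges {1,2},{2,3},{3,4},{1,4}. Then the cut polytope Cut^□(P_3) is not affinely isomorphic to any face of the cut polytope Cut^□(C_4); that is, there is no face F of Cut^□(C_4) admitting a bijective affine map from Cut^□(P_3) onto F. -/

import Mathlib

open scoped Classical

noncomputable section

namespace CutPaper

open MvPolynomial

/-- An edge `e` is cut by the partition `A | Aᶜ` if it has exactly one endpoint in `A`. -/
def IsCutEdge {V : Type} (A : Set V) (e : Sym2 V) : Prop :=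
  ∃ u v : V, e = s(u, v) ∧ u ∈ A ∧ v ∉ A

/-- The cut set of `A`: all edges of `G` with exactly one endpoint in `A`. -/
def cutSet {V : Type} (G : SimpleGraph V) (A : Set V) : Set (Sym2 V) :=
  {e ∈ G.edgeSet | IsCutEdge A e}

lemma isCutEdge_compl {V : Type} (A : Set V) (e : Sym2 V) :
    IsCutEdge Aᶜ e ↔ IsCutEdge A e := by
  constructor <;> rintro ⟨u, v, rfl, hu, hv⟩
  · exact ⟨v, u, Sym2.eq_swap, Set.notMem_compl_iff.mp hv, hu⟩
  · exact ⟨v, u, Sym2.eq_swap, hv, not_not_intro hu⟩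

/-- Two subsets determine the same unordered partition `A | Aᶜ` of `V`
iff they are equal or complementary. -/
def partitionSetoid (V : Type) : Setoid (Set V) where
  r A B := B = A ∨ B = Aᶜ
  iseqv := by
    refine ⟨fun A => Or.inl rfl, @fun A B h => ?_, @fun A B C h1 h2 => ?_⟩
    · rcases h with rfl | rfl
      · exact Or.inl rfl
      · exact Or.inr (compl_compl A).symm
    · rcases h1 with rfl | rfl <;> rcases h2 with rfl | rfl
      · exact Or.inl rfl
      · exact Or.inr rfl
      · exact Or.inr rfl
      · exact Or.inl (compl_compl A)

/-- The unordered partitions `A | Aᶜ` of `V`, indexing the variables of `S_G`. -/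
abbrev Partition (V : Type) := Quotient (partitionSetoid V)

variable (K : Type) [CommRing K]

/-- The variable `q_{A|Aᶜ}` of the polynomial ring `S_G`. -/
def qPart {V : Type} (A : Set V) : MvPolynomial (Partition V) K :=
  X (Quotient.mk (partitionSetoid V) A)

/-- The monomial `u_A = ∏_{e ∈ Cut(A)} s_e · ∏_{e ∈ E \ Cut(A)} t_e`;
the variable `s_e` is `X (true, e)` and `t_e` is `X (false, e)`. -/
def cutMonomial {V : Type} [Finite V] (G : SimpleGraph V) (A : Set V) :
    MvPolynomial (Bool × Sym2 V) K :=
  ∏ e ∈ (Set.toFinite G.edgeSet).toFinset,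
    if IsCutEdge A e then X (true, e) else X (false, e)

lemma cutMonomial_compl {V : Type} [Finite V] (G : SimpleGraph V) (A : Set V) :
    cutMonomial K G Aᶜ = cutMonomial K G A := by
  unfold cutMonomial
  refine Finset.prod_congr rfl fun e _ => ?_
  by_cases h : IsCutEdge A e
  · rw [if_pos ((isCutEdge_compl A e).mpr h), if_pos h]
  · rw [if_neg fun hc => h ((isCutEdge_compl A e).mp hc), if_neg h]

/-- The `K`-algebra homomorphism `φ_G : S_G → R_G`, `q_{A|Aᶜ} ↦ u_A`. -/
def phi {V : Type} [Finite V] (G : SimpleGraph V) :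
    MvPolynomial (Partition V) K →ₐ[K] MvPolynomial (Bool × Sym2 V) K :=
  aeval fun p : Partition V =>
    Quotient.lift (cutMonomial K G)
      (fun A B hAB => by
        have h : B = A ∨ B = Aᶜ := hAB
        rcases h with rfl | rfl
        · rfl
        · exact (cutMonomial_compl K G A).symm) p

/-- The cut ideal `I_G = ker φ_G`. -/
def cutIdeal {V : Type} [Finite V] (G : SimpleGraph V) :
    Ideal (MvPolynomial (Partition V) K) :=
  RingHom.ker (phi K G)

/-- The cut algebra `K[G]`, i.e. the image of `φ_G`: the `K`-subalgebra of `R_G`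
generated by the monomials `u_A`. -/
def cutAlgebra {V : Type} [Finite V] (G : SimpleGraph V) :
    Subalgebra K (MvPolynomial (Bool × Sym2 V) K) :=
  Algebra.adjoin K {m | ∃ A : Set V, m = cutMonomial K G A}

/-- The generator `u_A` of the cut algebra, as an element of the cut algebra. -/
def uGen {V : Type} [Finite V] (G : SimpleGraph V) (A : Set V) : ↥(cutAlgebra K G) :=
  ⟨cutMonomial K G A, Algebra.subset_adjoin ⟨A, rfl⟩⟩

/-- An element of `S_G/I` is homogeneous of degree `d` if it is the class of a homogeneous
polynomial of degree `d`. -/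
def QuotHomogeneous {σ : Type} (I : Ideal (MvPolynomial σ K)) (d : ℕ)
    (x : MvPolynomial σ K ⧸ I) : Prop :=
  ∃ f : MvPolynomial σ K, f.IsHomogeneous d ∧ Ideal.Quotient.mk I f = x

/-- The cut algebra of `H` is an algebra retract of the cut algebra of `G`:
there are homogeneous `K`-algebra homomorphisms `ι : K[H] → K[G]` (injective) and
`π : K[G] → K[H]` with `π ∘ ι = id`. -/
def CutAlgebraRetract {V W : Type} [Finite V] [Finite W]
    (H : SimpleGraph W) (G : SimpleGraph V) : Prop :=
  ∃ (ι : (MvPolynomial (Partition W) K ⧸ cutIdeal K H) →ₐ[K]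
      (MvPolynomial (Partition V) K ⧸ cutIdeal K G))
    (π : (MvPolynomial (Partition V) K ⧸ cutIdeal K G) →ₐ[K]
      (MvPolynomial (Partition W) K ⧸ cutIdeal K H)),
    Function.Injective ι ∧
    (∀ d x, QuotHomogeneous K (cutIdeal K H) d x →
      ∃ d', QuotHomogeneous K (cutIdeal K G) d' (ι x)) ∧
    (∀ d x, QuotHomogeneous K (cutIdeal K G) d x →
      ∃ d', QuotHomogeneous K (cutIdeal K H) d' (π x)) ∧
    π.comp ι = AlgHom.id K _

/-- The graph obtained from `G` by contracting the edge `{u, v}`: the vertex `u` is removed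
and merged into `v`. -/
def contractEdge {V : Type} (G : SimpleGraph V) (u v : V) :
    SimpleGraph {x : V // x ≠ u} where
  Adj a b := a ≠ b ∧
    (G.Adj a b ∨ ((a : V) = v ∧ G.Adj u b) ∨ ((b : V) = v ∧ G.Adj a u))
  symm := by
    constructor
    rintro a b ⟨hne, h | ⟨ha, h⟩ | ⟨hb, h⟩⟩
    · exact ⟨hne.symm, Or.inl h.symm⟩
    · exact ⟨hne.symm, Or.inr (Or.inr ⟨ha, h.symm⟩)⟩
    · exact ⟨hne.symm, Or.inr (Or.inl ⟨hb, h.symm⟩)⟩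
  loopless := ⟨fun a h => h.1 rfl⟩

/-- The induced subgraph `G_W` is a neighborhood-minor of `G`: `W` and `W' = Wᶜ` are nonempty
and there is a vertex `v ∈ W` with `W ∩ N_G(W') ⊆ N_{G_W}[v]`. -/
def IsNeighborhoodMinor {V : Type} (G : SimpleGraph V) (W : Set V) : Prop :=
  W.Nonempty ∧ Wᶜ.Nonempty ∧
    ∃ v ∈ W, ∀ x ∈ W, (∃ y ∈ Wᶜ, G.Adj y x) → x = v ∨ G.Adj v x

/-- The cut vector `δ_A ∈ {0,1}^E` of the partition `A | Aᶜ`. -/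
def cutVector {V : Type} (G : SimpleGraph V) (A : Set V) : ↥G.edgeSet → ℝ :=
  fun e => if IsCutEdge A (e : Sym2 V) then 1 else 0

/-- The cut polytope `Cut^□(G) ⊆ ℝ^E`: the convex hull of the cut vectors. -/
def cutPolytope {V : Type} (G : SimpleGraph V) : Set (↥G.edgeSet → ℝ) :=
  convexHull ℝ {x | ∃ A : Set V, x = cutVector G A}

/-- `F` is a face of `P`: either a trivial face (`P` or `∅`), or the intersection of `P`
with a supporting hyperplane. -/
def IsFace {α : Type} (P F : Set (α → ℝ)) : Prop :=
  F = P ∨ F = ∅ ∨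
    ∃ (φ : (α → ℝ) →ₗ[ℝ] ℝ) (c : ℝ), φ ≠ 0 ∧
      (∀ x ∈ P, φ x ≤ c) ∧ F = P ∩ {x | φ x = c}

/-- `P` and `Q` are affinely isomorphic: there is a bijective map from `P` onto `Q`
extending to an affine map. -/
def AffinelyIsomorphic {α β : Type} (P : Set (α → ℝ)) (Q : Set (β → ℝ)) : Prop :=
  ∃ f : (α → ℝ) →ᵃ[ℝ] (β → ℝ), Set.InjOn f P ∧ f '' P = Q

/-- The monomial `z · ∏_{e ∈ Cut(A)} y_e` of the polytopal algebra of the cut polytope;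
the variable `z` is `X none` and `y_e` is `X (some e)`. -/
def polytopeMonomial {V : Type} [Finite V] (G : SimpleGraph V) (A : Set V) :
    MvPolynomial (Option (Sym2 V)) K :=
  X none * ∏ e ∈ (Set.toFinite (cutSet G A)).toFinset, X (some e)

/-- The polytopal algebra `K[Cut^□(G)]`: the subalgebra of `K[y_e (e ∈ E), z]` generated by
the monomials `z · y^{δ_A}` attached to the lattice points (= cut vectors) of `Cut^□(G)`. -/
def polytopalAlgebra {V : Type} [Finite V] (G : SimpleGraph V) :
    Subalgebra K (MvPolynomial (Option (Sym2 V)) K) :=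
  Algebra.adjoin K {m | ∃ A : Set V, m = polytopeMonomial K G A}

/-- `G'` is a combinatorial retract of `G`: it is obtained from `G` by a finite sequence of
edge contractions and neighborhood-minors. -/
inductive CombinatorialRetract : ∀ {V W : Type}, SimpleGraph V → SimpleGraph W → Prop
  | refl {V : Type} (G : SimpleGraph V) : CombinatorialRetract G G
  | contract {V W : Type} (G : SimpleGraph V) (u v : V) (huv : G.Adj u v)
      (G' : SimpleGraph W) (h : CombinatorialRetract (contractEdge G u v) G') :
      CombinatorialRetract G G'
  | nbhdMinor {V W : Type} (G : SimpleGraph V) (S : Set V)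
      (hS : IsNeighborhoodMinor G S) (G' : SimpleGraph W)
      (h : CombinatorialRetract (SimpleGraph.induce S G) G') :
      CombinatorialRetract G G'

def P3 : SimpleGraph (Fin 3) := SimpleGraph.fromEdgeSet {s(0, 1), s(1, 2)}

def C4 : SimpleGraph (Fin 4) := SimpleGraph.fromEdgeSet {s(0, 1), s(1, 2), s(2, 3), s(0, 3)}


/-! ### Auxiliary material for `stmt7` -/

section Stmt7Aux

lemma P3_edge : P3.edgeSet = {s(0,1), s(1,2)} := by
  rw [P3, SimpleGraph.edgeSet_fromEdgeSet]
  ext e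
  constructor
  · rintro ⟨h, _⟩; exact h
  · rintro h
    refine ⟨h, ?_⟩
    simp only [Set.mem_insert_iff, Set.mem_singleton_iff] at h
    rcases h with rfl | rfl <;> decide

lemma C4_edge : C4.edgeSet = {s(0,1), s(1,2), s(2,3), s(0,3)} := by
  rw [C4, SimpleGraph.edgeSet_fromEdgeSet]
  ext e
  constructor
  · rintro ⟨h, _⟩; exact h
  · rintro h
    refine ⟨h, ?_⟩
    simp only [Set.mem_insert_iff, Set.mem_singleton_iff] at h
    rcases h with rfl | rfl | rfl | rfl <;> decide

lemma isCutEdge_mk {V : Type} (A : Set V) (u v : V) :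
    IsCutEdge A s(u,v) ↔ (u ∈ A ∧ v ∉ A) ∨ (v ∈ A ∧ u ∉ A) := by
  constructor
  · rintro ⟨x, y, hxy, hx, hy⟩
    rw [Sym2.eq_iff] at hxy
    rcases hxy with ⟨rfl, rfl⟩ | ⟨rfl, rfl⟩
    · exact Or.inl ⟨hx, hy⟩
    · exact Or.inr ⟨hx, hy⟩
  · rintro (⟨h1, h2⟩ | ⟨h1, h2⟩)
    · exact ⟨u, v, rfl, h1, h2⟩
    · exact ⟨v, u, Sym2.eq_swap, h1, h2⟩

lemma cutVector_mk {V : Type} (G : SimpleGraph V) (A : Set V) (u v : V)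
    (h : s(u,v) ∈ G.edgeSet) :
    cutVector G A ⟨s(u,v), h⟩ = if (u ∈ A ∧ v ∉ A) ∨ (v ∈ A ∧ u ∉ A) then 1 else 0 := by
  simp only [cutVector, isCutEdge_mk]

lemma cutVector_mk_bool {V : Type} (G : SimpleGraph V) (A : Set V) (u v : V)
    (h : s(u,v) ∈ G.edgeSet) :
    cutVector G A ⟨s(u,v), h⟩
      = if xor (decide (u ∈ A)) (decide (v ∈ A)) then 1 else 0 := by
  rw [cutVector_mk]
  by_cases hu : u ∈ A <;> by_cases hv : v ∈ A <;> simp [hu, hv]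

def ep1 : ↥P3.edgeSet := ⟨s(0,1), by rw [P3_edge]; simp⟩
def ep2 : ↥P3.edgeSet := ⟨s(1,2), by rw [P3_edge]; simp⟩
def ec1 : ↥C4.edgeSet := ⟨s(0,1), by rw [C4_edge]; simp⟩
def ec2 : ↥C4.edgeSet := ⟨s(1,2), by rw [C4_edge]; simp⟩
def ec3 : ↥C4.edgeSet := ⟨s(2,3), by rw [C4_edge]; simp⟩
def ec4 : ↥C4.edgeSet := ⟨s(0,3), by rw [C4_edge]; simp⟩

lemma P3_edge_cases (e : ↥P3.edgeSet) : e = ep1 ∨ e = ep2 := by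
  obtain ⟨e, he⟩ := e
  rw [P3_edge] at he
  simp only [Set.mem_insert_iff, Set.mem_singleton_iff] at he
  rcases he with rfl | rfl
  · left; rfl
  · right; rfl

lemma C4_edge_cases (e : ↥C4.edgeSet) : e = ec1 ∨ e = ec2 ∨ e = ec3 ∨ e = ec4 := by
  obtain ⟨e, he⟩ := e
  rw [C4_edge] at he
  simp only [Set.mem_insert_iff, Set.mem_singleton_iff] at he
  rcases he with rfl | rfl | rfl | rfl
  · left; rfl
  · right; left; rfl
  · right; right; left; rfl
  · right; right; right; rfl

lemma real_sum_bool (p q r s : Bool)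
    (h : (if p then (1:ℝ) else 0) + (if q then 1 else 0)
       = (if r then 1 else 0) + (if s then 1 else 0)) :
    xor p q = xor r s ∧ (p && q) = (r && s) := by
  revert h; cases p <;> cases q <;> cases r <;> cases s <;> norm_num

lemma real_ne_bool (p q : Bool)
    (h : (if p then (1:ℝ) else 0) ≠ (if q then 1 else 0)) : (p != q) = true := by
  revert h; cases p <;> cases q <;> norm_num

lemma real_add_one_bool (p q : Bool) (h : (p != q) = true) :
    (if p then (1:ℝ) else 0) + (if q then 1 else 0) = 1 := by
  revert h; cases p <;> cases q <;> norm_num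

lemma cutParity (p q r s : Bool) :
    xor (xor (xor p q) (xor q r)) (xor (xor r s) (xor p s)) = false := by
  cases p <;> cases q <;> cases r <;> cases s <;> rfl

lemma parity_solve (a b c d : Bool) (h : (xor (xor a b) (xor c d)) = false) :
    d = xor (xor a b) c := by
  revert h; cases a <;> cases b <;> cases c <;> cases d <;> intro h <;> simp_all

set_option maxRecDepth 40000 in
set_option maxHeartbeats 1000000 in
lemma boolAntiAux : ∀ x1 x2 x3 y1 y2 y3 z1 z2 z3 w1 w2 w3 : Bool,
    (!((x1 != y1 || x2 != y2 || x3 != y3 || (xor (xor x1 x2) x3) != (xor (xor y1 y2) y3)) &&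
       (x1 != z1 || x2 != z2 || x3 != z3 || (xor (xor x1 x2) x3) != (xor (xor z1 z2) z3)) &&
       (x1 != w1 || x2 != w2 || x3 != w3 || (xor (xor x1 x2) x3) != (xor (xor w1 w2) w3)) &&
       (y1 != z1 || y2 != z2 || y3 != z3 || (xor (xor y1 y2) y3) != (xor (xor z1 z2) z3)) &&
       (y1 != w1 || y2 != w2 || y3 != w3 || (xor (xor y1 y2) y3) != (xor (xor w1 w2) w3)) &&
       (z1 != w1 || z2 != w2 || z3 != w3 || (xor (xor z1 z2) z3) != (xor (xor w1 w2) w3)) &&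
       (((xor x1 w1) == (xor y1 z1)) && ((x1 && w1) == (y1 && z1))) &&
       (((xor x2 w2) == (xor y2 z2)) && ((x2 && w2) == (y2 && z2))) &&
       (((xor x3 w3) == (xor y3 z3)) && ((x3 && w3) == (y3 && z3))) &&
       (((xor (xor (xor x1 x2) x3) (xor (xor w1 w2) w3)) == (xor (xor (xor y1 y2) y3) (xor (xor z1 z2) z3))) &&
        (((xor (xor x1 x2) x3) && (xor (xor w1 w2) w3)) == ((xor (xor y1 y2) y3) && (xor (xor z1 z2) z3))))) ||
     ((x1 != w1) && (x2 != w2) && (x3 != w3) &&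
      ((xor (xor x1 x2) x3) != (xor (xor w1 w2) w3)))) = true := by
  decide

lemma boolAnti (x1 x2 x3 x4 y1 y2 y3 y4 z1 z2 z3 z4 w1 w2 w3 w4 : Bool)
    (hx : (xor (xor x1 x2) (xor x3 x4)) = false)
    (hy : (xor (xor y1 y2) (xor y3 y4)) = false)
    (hz : (xor (xor z1 z2) (xor z3 z4)) = false)
    (hw : (xor (xor w1 w2) (xor w3 w4)) = false)
    (hxy : (x1 != y1 || x2 != y2 || x3 != y3 || x4 != y4) = true)
    (hxz : (x1 != z1 || x2 != z2 || x3 != z3 || x4 != z4) = true)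
    (hxw : (x1 != w1 || x2 != w2 || x3 != w3 || x4 != w4) = true)
    (hyz : (y1 != z1 || y2 != z2 || y3 != z3 || y4 != z4) = true)
    (hyw : (y1 != w1 || y2 != w2 || y3 != w3 || y4 != w4) = true)
    (hzw : (z1 != w1 || z2 != w2 || z3 != w3 || z4 != w4) = true)
    (h1 : (xor x1 w1) = (xor y1 z1)) (h1' : (x1 && w1) = (y1 && z1))
    (h2 : (xor x2 w2) = (xor y2 z2)) (h2' : (x2 && w2) = (y2 && z2))
    (h3 : (xor x3 w3) = (xor y3 z3)) (h3' : (x3 && w3) = (y3 && z3))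
    (h4 : (xor x4 w4) = (xor y4 z4)) (h4' : (x4 && w4) = (y4 && z4)) :
    (x1 != w1) = true ∧ (x2 != w2) = true ∧ (x3 != w3) = true ∧ (x4 != w4) = true := by
  have ex := parity_solve _ _ _ _ hx
  have ey := parity_solve _ _ _ _ hy
  have ez := parity_solve _ _ _ _ hz
  have ew := parity_solve _ _ _ _ hw
  subst ex ey ez ew
  have H := boolAntiAux x1 x2 x3 y1 y2 y3 z1 z2 z3 w1 w2 w3
  rw [hxy, hxz, hxw, hyz, hyw, hzw, h1, h1', h2, h2', h3, h3', h4, h4'] at H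
  simp only [beq_self_eq_true, Bool.and_true, Bool.true_and, Bool.and_self, Bool.not_true,
    Bool.false_or, Bool.and_eq_true] at H
  exact ⟨H.1.1.1, H.1.1.2, H.1.2, H.2⟩

lemma box_extreme {α : Type} (P : Set (α → ℝ)) (hbox : ∀ x ∈ P, ∀ e, 0 ≤ x e ∧ x e ≤ 1)
    (v : α → ℝ) (hv : v ∈ P) (h01 : ∀ e, v e = 0 ∨ v e = 1) :
    v ∈ P.extremePoints ℝ := by
  refine ⟨hv, fun y hy z hz hseg => ?_⟩
  obtain ⟨a, b, ha, hb, hab, heq⟩ := hseg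
  have key : y = v ∧ z = v := by
    constructor <;> funext e <;>
    · have h1 := congrFun heq e
      simp only [Pi.add_apply, Pi.smul_apply, smul_eq_mul] at h1
      have hy1 := hbox y hy e
      have hz1 := hbox z hz e
      rcases h01 e with h0 | h0 <;> nlinarith
  exact key.1

lemma extreme_image {α β : Type} (f : (α → ℝ) →ᵃ[ℝ] (β → ℝ)) (P : Set (α → ℝ))
    (hP : Convex ℝ P) (hinj : Set.InjOn f P) {x : α → ℝ} (hx : x ∈ P.extremePoints ℝ) :
    f x ∈ (f '' P).extremePoints ℝ := by
  refine ⟨⟨x, hx.1, rfl⟩, ?_⟩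
  rintro _ ⟨y, hy, rfl⟩ _ ⟨z, hz, rfl⟩ ⟨a, b, ha, hb, hab, heq⟩
  have hcomb : f (a • y + b • z) = a • f y + b • f z := Convex.combo_affine_apply hab
  have hmem : a • y + b • z ∈ P := hP hy hz ha.le hb.le hab
  have hxeq : x = a • y + b • z := by
    apply hinj hx.1 hmem
    rw [hcomb, heq]
  have := hx.2 hy hz ⟨a, b, ha, hb, hab, hxeq.symm⟩
  exact congrArg f this

lemma extreme_face {β : Type} (Q : Set (β → ℝ)) (φ : (β → ℝ) →ₗ[ℝ] ℝ) (c : ℝ)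
    (hb : ∀ x ∈ Q, φ x ≤ c) {x : β → ℝ}
    (hx : x ∈ (Q ∩ {x | φ x = c}).extremePoints ℝ) : x ∈ Q.extremePoints ℝ := by
  refine ⟨hx.1.1, fun y hy z hz hseg => ?_⟩
  obtain ⟨a, b, ha, hb', hab, heq⟩ := hseg
  have hφ : φ x = c := hx.1.2
  have hφeq : a * φ y + b * φ z = c := by
    rw [← hφ, ← heq]; simp [map_add, map_smul]
  have hyc : φ y = c := by
    by_contra h
    have hlt : φ y < c := lt_of_le_of_ne (hb y hy) h
    have h1 : a * φ y < a * c := mul_lt_mul_of_pos_left hlt ha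
    have h2 : b * φ z ≤ b * c := mul_le_mul_of_nonneg_left (hb z hz) hb'.le
    have h3 : a * c + b * c = c := by linear_combination c * hab
    linarith
  have hzc : φ z = c := by
    by_contra h
    have hlt : φ z < c := lt_of_le_of_ne (hb z hz) h
    have h1 : b * φ z < b * c := mul_lt_mul_of_pos_left hlt hb'
    have h2 : a * φ y ≤ a * c := mul_le_mul_of_nonneg_left (hb y hy) ha.le
    have h3 : a * c + b * c = c := by linear_combination c * hab
    linarith
  exact hx.2 ⟨hy, hyc⟩ ⟨hz, hzc⟩ ⟨a, b, ha, hb', hab, heq⟩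

end Stmt7Aux

section Stmt7Eval

lemma cv3_ep1 (A : Set (Fin 3)) :
    cutVector P3 A ep1 = if (0 ∈ A ∧ 1 ∉ A) ∨ (1 ∈ A ∧ 0 ∉ A) then 1 else 0 :=
  cutVector_mk P3 A 0 1 ep1.2

lemma cv3_ep2 (A : Set (Fin 3)) :
    cutVector P3 A ep2 = if (1 ∈ A ∧ 2 ∉ A) ∨ (2 ∈ A ∧ 1 ∉ A) then 1 else 0 :=
  cutVector_mk P3 A 1 2 ep2.2

lemma cv4_ec1 (A : Set (Fin 4)) :
    cutVector C4 A ec1 = if (0 ∈ A ∧ 1 ∉ A) ∨ (1 ∈ A ∧ 0 ∉ A) then 1 else 0 :=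
  cutVector_mk C4 A 0 1 ec1.2

lemma cv4_ec2 (A : Set (Fin 4)) :
    cutVector C4 A ec2 = if (1 ∈ A ∧ 2 ∉ A) ∨ (2 ∈ A ∧ 1 ∉ A) then 1 else 0 :=
  cutVector_mk C4 A 1 2 ec2.2

lemma cv4_ec3 (A : Set (Fin 4)) :
    cutVector C4 A ec3 = if (2 ∈ A ∧ 3 ∉ A) ∨ (3 ∈ A ∧ 2 ∉ A) then 1 else 0 :=
  cutVector_mk C4 A 2 3 ec3.2

lemma cv4_ec4 (A : Set (Fin 4)) :
    cutVector C4 A ec4 = if (0 ∈ A ∧ 3 ∉ A) ∨ (3 ∈ A ∧ 0 ∉ A) then 1 else 0 :=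
  cutVector_mk C4 A 0 3 ec4.2

lemma cv4b_ec1 (A : Set (Fin 4)) :
    cutVector C4 A ec1
      = if xor (decide ((0:Fin 4) ∈ A)) (decide ((1:Fin 4) ∈ A)) then 1 else 0 :=
  cutVector_mk_bool C4 A 0 1 ec1.2

lemma cv4b_ec2 (A : Set (Fin 4)) :
    cutVector C4 A ec2
      = if xor (decide ((1:Fin 4) ∈ A)) (decide ((2:Fin 4) ∈ A)) then 1 else 0 :=
  cutVector_mk_bool C4 A 1 2 ec2.2

lemma cv4b_ec3 (A : Set (Fin 4)) :
    cutVector C4 A ec3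
      = if xor (decide ((2:Fin 4) ∈ A)) (decide ((3:Fin 4) ∈ A)) then 1 else 0 :=
  cutVector_mk_bool C4 A 2 3 ec3.2

lemma cv4b_ec4 (A : Set (Fin 4)) :
    cutVector C4 A ec4
      = if xor (decide ((0:Fin 4) ∈ A)) (decide ((3:Fin 4) ∈ A)) then 1 else 0 :=
  cutVector_mk_bool C4 A 0 3 ec4.2

end Stmt7Eval


set_option maxHeartbeats 2000000 in
theorem stmt7 : ¬ ∃ F : Set (↥C4.edgeSet → ℝ),
    IsFace (cutPolytope C4) F ∧ AffinelyIsomorphic (cutPolytope P3) F := by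
  rintro ⟨F, hface, f, hinj, himg⟩
  have memP : ∀ A : Set (Fin 3), cutVector P3 A ∈ cutPolytope P3 :=
    fun A => subset_convexHull ℝ _ ⟨A, rfl⟩
  have memQ : ∀ A : Set (Fin 4), cutVector C4 A ∈ cutPolytope C4 :=
    fun A => subset_convexHull ℝ _ ⟨A, rfl⟩
  have hPconv : Convex ℝ (cutPolytope P3) := convex_convexHull ℝ _
  -- bounding box for the square
  have hboxP : ∀ x ∈ cutPolytope P3, ∀ e, 0 ≤ x e ∧ x e ≤ 1 := by
    have hsub : cutPolytope P3 ⊆ {x : ↥P3.edgeSet → ℝ | ∀ e, 0 ≤ x e ∧ x e ≤ 1} := by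
      apply convexHull_min
      · rintro y ⟨A, rfl⟩ e
        unfold cutVector
        split <;> norm_num
      · intro y hy z hz a b ha hb hab
        intro e
        have h1 := hy e
        have h2 := hz e
        simp only [Pi.add_apply, Pi.smul_apply, smul_eq_mul]
        constructor
        · nlinarith [h1.1, h2.1]
        · nlinarith [h1.2, h2.2]
    exact fun x hx => hsub hx
  -- the four vertices of the square and their coordinates
  set pa := cutVector P3 (∅ : Set (Fin 3)) with hpa_def
  set pb := cutVector P3 ({0} : Set (Fin 3)) with hpb_def
  set pc := cutVector P3 ({2} : Set (Fin 3)) with hpc_def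
  set pd := cutVector P3 ({1} : Set (Fin 3)) with hpd_def
  have hpa1 : pa ep1 = 0 := by
    norm_num [hpa_def, cv3_ep1]
  have hpa2 : pa ep2 = 0 := by
    norm_num [hpa_def, cv3_ep2]
  have hpb1 : pb ep1 = 1 := by
    norm_num [hpb_def, cv3_ep1, Set.mem_singleton_iff, Fin.ext_iff]
  have hpb2 : pb ep2 = 0 := by
    norm_num [hpb_def, cv3_ep2, Set.mem_singleton_iff, Fin.ext_iff]
  have hpc1 : pc ep1 = 0 := by
    norm_num [hpc_def, cv3_ep1, Set.mem_singleton_iff, Fin.ext_iff]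
  have hpc2 : pc ep2 = 1 := by
    norm_num [hpc_def, cv3_ep2, Set.mem_singleton_iff, Fin.ext_iff]
  have hpd1 : pd ep1 = 1 := by
    norm_num [hpd_def, cv3_ep1, Set.mem_singleton_iff, Fin.ext_iff]
  have hpd2 : pd ep2 = 1 := by
    norm_num [hpd_def, cv3_ep2, Set.mem_singleton_iff, Fin.ext_iff]
  -- the parallelogram relation
  have hsum : pa + pd = pb + pc := by
    funext e
    rcases P3_edge_cases e with rfl | rfl
    · simp only [Pi.add_apply]; rw [hpa1, hpd1, hpb1, hpc1]; norm_num
    · simp only [Pi.add_apply]; rw [hpa2, hpd2, hpb2, hpc2]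
  -- distinctness of the four vertices
  have dab : pa ≠ pb := by
    intro h; have := congrFun h ep1; rw [hpa1, hpb1] at this; norm_num at this
  have dac : pa ≠ pc := by
    intro h; have := congrFun h ep2; rw [hpa2, hpc2] at this; norm_num at this
  have dad : pa ≠ pd := by
    intro h; have := congrFun h ep1; rw [hpa1, hpd1] at this; norm_num at this
  have dbc : pb ≠ pc := by
    intro h; have := congrFun h ep1; rw [hpb1, hpc1] at this; norm_num at this
  have dbd : pb ≠ pd := by
    intro h; have := congrFun h ep2; rw [hpb2, hpd2] at this; norm_num at this
  have dcd : pc ≠ pd := by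
    intro h; have := congrFun h ep1; rw [hpc1, hpd1] at this; norm_num at this
  -- extremality of the four vertices in the square
  have exa : pa ∈ (cutPolytope P3).extremePoints ℝ := by
    refine box_extreme _ hboxP _ (memP _) fun e => ?_
    rcases P3_edge_cases e with rfl | rfl
    · rw [hpa1]; left; rfl
    · rw [hpa2]; left; rfl
  have exb : pb ∈ (cutPolytope P3).extremePoints ℝ := by
    refine box_extreme _ hboxP _ (memP _) fun e => ?_
    rcases P3_edge_cases e with rfl | rfl
    · rw [hpb1]; right; rfl
    · rw [hpb2]; left; rfl
  have exc : pc ∈ (cutPolytope P3).extremePoints ℝ := by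
    refine box_extreme _ hboxP _ (memP _) fun e => ?_
    rcases P3_edge_cases e with rfl | rfl
    · rw [hpc1]; left; rfl
    · rw [hpc2]; right; rfl
  have exd : pd ∈ (cutPolytope P3).extremePoints ℝ := by
    refine box_extreme _ hboxP _ (memP _) fun e => ?_
    rcases P3_edge_cases e with rfl | rfl
    · rw [hpd1]; right; rfl
    · rw [hpd2]; right; rfl
  -- images of the vertices
  have hFa : f pa ∈ F := himg ▸ Set.mem_image_of_mem f (memP _)
  have hFb : f pb ∈ F := himg ▸ Set.mem_image_of_mem f (memP _)
  have hFc : f pc ∈ F := himg ▸ Set.mem_image_of_mem f (memP _)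
  have hFd : f pd ∈ F := himg ▸ Set.mem_image_of_mem f (memP _)
  have fab : f pa ≠ f pb := fun h => dab (hinj (memP _) (memP _) h)
  have fac : f pa ≠ f pc := fun h => dac (hinj (memP _) (memP _) h)
  have fad : f pa ≠ f pd := fun h => dad (hinj (memP _) (memP _) h)
  have fbc : f pb ≠ f pc := fun h => dbc (hinj (memP _) (memP _) h)
  have fbd : f pb ≠ f pd := fun h => dbd (hinj (memP _) (memP _) h)
  have fcd : f pc ≠ f pd := fun h => dcd (hinj (memP _) (memP _) h)
  -- affine decomposition of f
  have hd : ∀ x : ↥P3.edgeSet → ℝ, f x = f.linear x + f 0 := by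
    intro x
    have h := f.map_vadd (0 : ↥P3.edgeSet → ℝ) x
    simpa using h
  -- the parallelogram relation for the images
  have hrel : f pa + f pd = f pb + f pc := by
    have hl4 : f.linear pa + f.linear pd = f.linear pb + f.linear pc := by
      rw [← map_add, ← map_add, hsum]
    rw [hd pa, hd pd, hd pb, hd pc, add_add_add_comm, hl4, add_add_add_comm]
  -- case analysis on the face
  rcases hface with hF | hF | ⟨φ, c, hφ0, hbound, hF⟩
  · -- `F` is the whole cut polytope of `C4`: dimension contradiction
    subst hF
    have hepne : ep1 ≠ ep2 := by
      intro h
      exact absurd (congrArg Subtype.val h) (by decide)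
    set u : ↥C4.edgeSet → ℝ := f.linear (fun e => if e = ep1 then 1 else 0) with hu_def
    set v : ↥C4.edgeSet → ℝ := f.linear (fun e => if e = ep2 then 1 else 0) with hv_def
    have hlin : ∀ x : ↥P3.edgeSet → ℝ, f.linear x = x ep1 • u + x ep2 • v := by
      intro x
      have hx : x = x ep1 • (fun e => if e = ep1 then (1:ℝ) else 0)
          + x ep2 • (fun e => if e = ep2 then (1:ℝ) else 0) := by
        funext e
        rcases P3_edge_cases e with rfl | rfl
        · simp [hepne]
        · simp [Ne.symm hepne]
      conv_lhs => rw [hx]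
      rw [map_add, map_smul, map_smul]
    have key : ∀ (x : ↥P3.edgeSet → ℝ) (e : ↥C4.edgeSet),
        f x e = x ep1 * u e + x ep2 * v e + f 0 e := by
      intro x e
      have h1 := congrFun (hd x) e
      have h2 := congrFun (hlin x) e
      simp only [Pi.add_apply, Pi.smul_apply, smul_eq_mul] at h1 h2
      rw [h1, h2]
    -- four vertices of the crosspolytope in the image
    have h0 : cutVector C4 (∅ : Set (Fin 4)) ∈ f '' cutPolytope P3 := by
      rw [himg]; exact memQ _
    have h1 : cutVector C4 ({1} : Set (Fin 4)) ∈ f '' cutPolytope P3 := by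
      rw [himg]; exact memQ _
    have h2 : cutVector C4 ({3} : Set (Fin 4)) ∈ f '' cutPolytope P3 := by
      rw [himg]; exact memQ _
    have h3 : cutVector C4 ({1,2} : Set (Fin 4)) ∈ f '' cutPolytope P3 := by
      rw [himg]; exact memQ _
    obtain ⟨x0, -, hx0⟩ := h0
    obtain ⟨x1, -, hx1⟩ := h1
    obtain ⟨x2, -, hx2⟩ := h2
    obtain ⟨x3, -, hx3⟩ := h3
    -- coordinate equations
    have E01 : x0 ep1 * u ec1 + x0 ep2 * v ec1 + f 0 ec1 = 0 := by
      rw [← key x0 ec1, hx0]; norm_num (config := {decide := true}) [cv4_ec1]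
    have E02 : x0 ep1 * u ec2 + x0 ep2 * v ec2 + f 0 ec2 = 0 := by
      rw [← key x0 ec2, hx0]; norm_num (config := {decide := true}) [cv4_ec2]
    have E03 : x0 ep1 * u ec3 + x0 ep2 * v ec3 + f 0 ec3 = 0 := by
      rw [← key x0 ec3, hx0]; norm_num (config := {decide := true}) [cv4_ec3]
    have E11 : x1 ep1 * u ec1 + x1 ep2 * v ec1 + f 0 ec1 = 1 := by
      rw [← key x1 ec1, hx1]
      norm_num (config := {decide := true}) [cv4_ec1, Set.mem_singleton_iff]
    have E12 : x1 ep1 * u ec2 + x1 ep2 * v ec2 + f 0 ec2 = 1 := by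
      rw [← key x1 ec2, hx1]
      norm_num (config := {decide := true}) [cv4_ec2, Set.mem_singleton_iff]
    have E13 : x1 ep1 * u ec3 + x1 ep2 * v ec3 + f 0 ec3 = 0 := by
      rw [← key x1 ec3, hx1]
      norm_num (config := {decide := true}) [cv4_ec3, Set.mem_singleton_iff]
    have E21 : x2 ep1 * u ec1 + x2 ep2 * v ec1 + f 0 ec1 = 0 := by
      rw [← key x2 ec1, hx2]
      norm_num (config := {decide := true}) [cv4_ec1, Set.mem_singleton_iff]
    have E22 : x2 ep1 * u ec2 + x2 ep2 * v ec2 + f 0 ec2 = 0 := by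
      rw [← key x2 ec2, hx2]
      norm_num (config := {decide := true}) [cv4_ec2, Set.mem_singleton_iff]
    have E23 : x2 ep1 * u ec3 + x2 ep2 * v ec3 + f 0 ec3 = 1 := by
      rw [← key x2 ec3, hx2]
      norm_num (config := {decide := true}) [cv4_ec3, Set.mem_singleton_iff]
    have E31 : x3 ep1 * u ec1 + x3 ep2 * v ec1 + f 0 ec1 = 1 := by
      rw [← key x3 ec1, hx3]
      norm_num (config := {decide := true}) [cv4_ec1, Set.mem_insert_iff, Set.mem_singleton_iff]
    have E32 : x3 ep1 * u ec2 + x3 ep2 * v ec2 + f 0 ec2 = 0 := by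
      rw [← key x3 ec2, hx3]
      norm_num (config := {decide := true}) [cv4_ec2, Set.mem_insert_iff, Set.mem_singleton_iff]
    -- differences
    obtain ⟨A1, hA1⟩ : ∃ a, a = x1 ep1 - x0 ep1 := ⟨_, rfl⟩
    obtain ⟨B1, hB1⟩ : ∃ a, a = x1 ep2 - x0 ep2 := ⟨_, rfl⟩
    obtain ⟨A2, hA2⟩ : ∃ a, a = x2 ep1 - x0 ep1 := ⟨_, rfl⟩
    obtain ⟨B2, hB2⟩ : ∃ a, a = x2 ep2 - x0 ep2 := ⟨_, rfl⟩
    obtain ⟨A3, hA3⟩ : ∃ a, a = x3 ep1 - x0 ep1 := ⟨_, rfl⟩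
    obtain ⟨B3, hB3⟩ : ∃ a, a = x3 ep2 - x0 ep2 := ⟨_, rfl⟩
    have F11 : A1 * u ec1 + B1 * v ec1 = 1 := by
      rw [hA1, hB1]; linear_combination E11 - E01
    have F12 : A1 * u ec2 + B1 * v ec2 = 1 := by
      rw [hA1, hB1]; linear_combination E12 - E02
    have F13 : A1 * u ec3 + B1 * v ec3 = 0 := by
      rw [hA1, hB1]; linear_combination E13 - E03
    have F21 : A2 * u ec1 + B2 * v ec1 = 0 := by
      rw [hA2, hB2]; linear_combination E21 - E01
    have F22 : A2 * u ec2 + B2 * v ec2 = 0 := by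
      rw [hA2, hB2]; linear_combination E22 - E02
    have F23 : A2 * u ec3 + B2 * v ec3 = 1 := by
      rw [hA2, hB2]; linear_combination E23 - E03
    have F31 : A3 * u ec1 + B3 * v ec1 = 1 := by
      rw [hA3, hB3]; linear_combination E31 - E01
    have F32 : A3 * u ec2 + B3 * v ec2 = 0 := by
      rw [hA3, hB3]; linear_combination E32 - E02
    -- linear algebra: three independent vectors in a plane
    have hDp : A1*B2 - A2*B1 = A3*B2 - B3*A2 := by
      linear_combination (-(A1*B2 - A2*B1))*F31 + (A3*B2 - B3*A2)*F11 + (B3*A1 - A3*B1)*F21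
    have hp0 : A3*B2 - B3*A2 = 0 := by
      linear_combination (A1*B2 - A2*B1)*F32 - (A3*B2 - B3*A2)*F12 - (B3*A1 - A3*B1)*F22
    have hD : A1*B2 - A2*B1 = 0 := hDp.trans hp0
    have hB2' : B2 = 0 := by
      linear_combination (-B2)*F11 + B1*F21 + (u ec1)*hD
    have hB1' : B1 = 0 := by
      linear_combination B2*F13 - B1*F23 - (u ec3)*hD
    have : (0:ℝ) = 1 := by
      linear_combination (A2*(u ec3))*F11 - (A1*(u ec3))*F21 + F23
        - (A2*(u ec3)*(v ec1))*hB1' + (A1*(u ec3)*(v ec1))*hB2' - (v ec3)*hB2'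
    norm_num at this
  · -- `F` is empty
    rw [hF] at hFa
    exact absurd hFa (Set.notMem_empty _)
  · -- `F` is a proper face, cut by the hyperplane `φ = c`
    subst hF
    -- the four image points are extreme points of the cut polytope of C4
    have exQ : ∀ p ∈ (cutPolytope P3).extremePoints ℝ,
        ∃ A : Set (Fin 4), f p = cutVector C4 A := by
      intro p hp
      have h1 : f p ∈ (f '' cutPolytope P3).extremePoints ℝ :=
        extreme_image f _ hPconv hinj hp
      rw [himg] at h1
      have h2 := extreme_face _ φ c hbound h1
      have h3 : f p ∈ (convexHull ℝ {x : ↥C4.edgeSet → ℝ | ∃ A : Set (Fin 4), x = cutVector C4 A}).extremePoints ℝ := h2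
      have h4 : f p ∈ {x : ↥C4.edgeSet → ℝ | ∃ A : Set (Fin 4), x = cutVector C4 A} :=
        extremePoints_convexHull_subset h3
      exact h4
    obtain ⟨A, hA⟩ := exQ pa exa
    obtain ⟨B, hB⟩ := exQ pb exb
    obtain ⟨C, hC⟩ := exQ pc exc
    obtain ⟨D, hD'⟩ := exQ pd exd
    -- boolean coordinates
    obtain ⟨a0, ha0⟩ : ∃ t, t = decide ((0:Fin 4) ∈ A) := ⟨_, rfl⟩
    obtain ⟨a1, ha1⟩ : ∃ t, t = decide ((1:Fin 4) ∈ A) := ⟨_, rfl⟩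
    obtain ⟨a2, ha2⟩ : ∃ t, t = decide ((2:Fin 4) ∈ A) := ⟨_, rfl⟩
    obtain ⟨a3, ha3⟩ : ∃ t, t = decide ((3:Fin 4) ∈ A) := ⟨_, rfl⟩
    obtain ⟨b0, hb0⟩ : ∃ t, t = decide ((0:Fin 4) ∈ B) := ⟨_, rfl⟩
    obtain ⟨b1, hb1⟩ : ∃ t, t = decide ((1:Fin 4) ∈ B) := ⟨_, rfl⟩
    obtain ⟨b2, hb2⟩ : ∃ t, t = decide ((2:Fin 4) ∈ B) := ⟨_, rfl⟩
    obtain ⟨b3, hb3⟩ : ∃ t, t = decide ((3:Fin 4) ∈ B) := ⟨_, rfl⟩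
    obtain ⟨c0, hc0'⟩ : ∃ t, t = decide ((0:Fin 4) ∈ C) := ⟨_, rfl⟩
    obtain ⟨c1, hc1'⟩ : ∃ t, t = decide ((1:Fin 4) ∈ C) := ⟨_, rfl⟩
    obtain ⟨c2, hc2'⟩ : ∃ t, t = decide ((2:Fin 4) ∈ C) := ⟨_, rfl⟩
    obtain ⟨c3, hc3'⟩ : ∃ t, t = decide ((3:Fin 4) ∈ C) := ⟨_, rfl⟩
    obtain ⟨d0, hd0⟩ : ∃ t, t = decide ((0:Fin 4) ∈ D) := ⟨_, rfl⟩
    obtain ⟨d1, hd1⟩ : ∃ t, t = decide ((1:Fin 4) ∈ D) := ⟨_, rfl⟩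
    obtain ⟨d2, hd2⟩ : ∃ t, t = decide ((2:Fin 4) ∈ D) := ⟨_, rfl⟩
    obtain ⟨d3, hd3⟩ : ∃ t, t = decide ((3:Fin 4) ∈ D) := ⟨_, rfl⟩
    have va1 : f pa ec1 = if xor a0 a1 then 1 else 0 := by rw [hA, cv4b_ec1, ha0, ha1]
    have va2 : f pa ec2 = if xor a1 a2 then 1 else 0 := by rw [hA, cv4b_ec2, ha1, ha2]
    have va3 : f pa ec3 = if xor a2 a3 then 1 else 0 := by rw [hA, cv4b_ec3, ha2, ha3]
    have va4 : f pa ec4 = if xor a0 a3 then 1 else 0 := by rw [hA, cv4b_ec4, ha0, ha3]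
    have vb1 : f pb ec1 = if xor b0 b1 then 1 else 0 := by rw [hB, cv4b_ec1, hb0, hb1]
    have vb2 : f pb ec2 = if xor b1 b2 then 1 else 0 := by rw [hB, cv4b_ec2, hb1, hb2]
    have vb3 : f pb ec3 = if xor b2 b3 then 1 else 0 := by rw [hB, cv4b_ec3, hb2, hb3]
    have vb4 : f pb ec4 = if xor b0 b3 then 1 else 0 := by rw [hB, cv4b_ec4, hb0, hb3]
    have vc1 : f pc ec1 = if xor c0 c1 then 1 else 0 := by rw [hC, cv4b_ec1, hc0', hc1']
    have vc2 : f pc ec2 = if xor c1 c2 then 1 else 0 := by rw [hC, cv4b_ec2, hc1', hc2']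
    have vc3 : f pc ec3 = if xor c2 c3 then 1 else 0 := by rw [hC, cv4b_ec3, hc2', hc3']
    have vc4 : f pc ec4 = if xor c0 c3 then 1 else 0 := by rw [hC, cv4b_ec4, hc0', hc3']
    have vd1 : f pd ec1 = if xor d0 d1 then 1 else 0 := by rw [hD', cv4b_ec1, hd0, hd1]
    have vd2 : f pd ec2 = if xor d1 d2 then 1 else 0 := by rw [hD', cv4b_ec2, hd1, hd2]
    have vd3 : f pd ec3 = if xor d2 d3 then 1 else 0 := by rw [hD', cv4b_ec3, hd2, hd3]
    have vd4 : f pd ec4 = if xor d0 d3 then 1 else 0 := by rw [hD', cv4b_ec4, hd0, hd3]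
    -- distinctness in boolean form
    have mkdiff : ∀ (p q : ↥C4.edgeSet → ℝ)
        (P1 P2 P3' P4 Q1 Q2 Q3 Q4 : Bool),
        p ≠ q →
        p ec1 = (if P1 then 1 else 0) → p ec2 = (if P2 then 1 else 0) →
        p ec3 = (if P3' then 1 else 0) → p ec4 = (if P4 then 1 else 0) →
        q ec1 = (if Q1 then 1 else 0) → q ec2 = (if Q2 then 1 else 0) →
        q ec3 = (if Q3 then 1 else 0) → q ec4 = (if Q4 then 1 else 0) →
        ((P1 != Q1) || (P2 != Q2) || (P3' != Q3) || (P4 != Q4)) = true := by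
      intro p q P1 P2 P3' P4 Q1 Q2 Q3 Q4 hpq e1 e2 e3 e4 g1 g2 g3 g4
      obtain ⟨e, he⟩ := Function.ne_iff.mp hpq
      rcases C4_edge_cases e with rfl | rfl | rfl | rfl
      · rw [e1, g1] at he; simp [real_ne_bool _ _ he]
      · rw [e2, g2] at he; simp [real_ne_bool _ _ he]
      · rw [e3, g3] at he; simp [real_ne_bool _ _ he]
      · rw [e4, g4] at he; simp [real_ne_bool _ _ he]
    have Dab := mkdiff _ _ _ _ _ _ _ _ _ _ fab va1 va2 va3 va4 vb1 vb2 vb3 vb4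
    have Dac := mkdiff _ _ _ _ _ _ _ _ _ _ fac va1 va2 va3 va4 vc1 vc2 vc3 vc4
    have Dad := mkdiff _ _ _ _ _ _ _ _ _ _ fad va1 va2 va3 va4 vd1 vd2 vd3 vd4
    have Dbc := mkdiff _ _ _ _ _ _ _ _ _ _ fbc vb1 vb2 vb3 vb4 vc1 vc2 vc3 vc4
    have Dbd := mkdiff _ _ _ _ _ _ _ _ _ _ fbd vb1 vb2 vb3 vb4 vd1 vd2 vd3 vd4
    have Dcd := mkdiff _ _ _ _ _ _ _ _ _ _ fcd vc1 vc2 vc3 vc4 vd1 vd2 vd3 vd4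
    -- sum conditions in boolean form
    have S1' : (if xor a0 a1 then (1:ℝ) else 0) + (if xor d0 d1 then 1 else 0)
        = (if xor b0 b1 then 1 else 0) + (if xor c0 c1 then 1 else 0) := by
      have h := congrFun hrel ec1
      simp only [Pi.add_apply] at h
      rw [va1, vd1, vb1, vc1] at h
      exact h
    have S1 := real_sum_bool _ _ _ _ S1'
    have S2' : (if xor a1 a2 then (1:ℝ) else 0) + (if xor d1 d2 then 1 else 0)
        = (if xor b1 b2 then 1 else 0) + (if xor c1 c2 then 1 else 0) := by
      have h := congrFun hrel ec2
      simp only [Pi.add_apply] at h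
      rw [va2, vd2, vb2, vc2] at h
      exact h
    have S2 := real_sum_bool _ _ _ _ S2'
    have S3' : (if xor a2 a3 then (1:ℝ) else 0) + (if xor d2 d3 then 1 else 0)
        = (if xor b2 b3 then 1 else 0) + (if xor c2 c3 then 1 else 0) := by
      have h := congrFun hrel ec3
      simp only [Pi.add_apply] at h
      rw [va3, vd3, vb3, vc3] at h
      exact h
    have S3 := real_sum_bool _ _ _ _ S3'
    have S4' : (if xor a0 a3 then (1:ℝ) else 0) + (if xor d0 d3 then 1 else 0)
        = (if xor b0 b3 then 1 else 0) + (if xor c0 c3 then 1 else 0) := by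
      have h := congrFun hrel ec4
      simp only [Pi.add_apply] at h
      rw [va4, vd4, vb4, vc4] at h
      exact h
    have S4 := real_sum_bool _ _ _ _ S4'
    -- the antipodality
    obtain ⟨T1, T2, T3, T4⟩ := boolAnti (xor a0 a1) (xor a1 a2) (xor a2 a3) (xor a0 a3)
      (xor b0 b1) (xor b1 b2) (xor b2 b3) (xor b0 b3)
      (xor c0 c1) (xor c1 c2) (xor c2 c3) (xor c0 c3)
      (xor d0 d1) (xor d1 d2) (xor d2 d3) (xor d0 d3)
      (cutParity a0 a1 a2 a3) (cutParity b0 b1 b2 b3)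
      (cutParity c0 c1 c2 c3) (cutParity d0 d1 d2 d3)
      Dab Dac Dad Dbc Dbd Dcd
      S1.1 S1.2 S2.1 S2.2 S3.1 S3.2 S4.1 S4.2
    -- f pa + f pd is the all-ones vector
    have hone : f pa + f pd = (fun _ => (1:ℝ)) := by
      funext e
      rcases C4_edge_cases e with rfl | rfl | rfl | rfl
      · simp only [Pi.add_apply]; rw [va1, vd1]; exact real_add_one_bool _ _ T1
      · simp only [Pi.add_apply]; rw [va2, vd2]; exact real_add_one_bool _ _ T2
      · simp only [Pi.add_apply]; rw [va3, vd3]; exact real_add_one_bool _ _ T3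
      · simp only [Pi.add_apply]; rw [va4, vd4]; exact real_add_one_bool _ _ T4
    -- the functional takes value 2c on the all-ones vector
    have hφone : φ (fun _ => (1:ℝ)) = 2*c := by
      rw [← hone, map_add, hFa.2, hFd.2]; ring
    have hle : ∀ A' : Set (Fin 4), φ (cutVector C4 A') ≤ c := fun A' => hbound _ (memQ A')
    have pair : ∀ A1 A2 : Set (Fin 4),
        cutVector C4 A1 + cutVector C4 A2 = (fun _ => (1:ℝ)) → φ (cutVector C4 A1) = c := by
      intro A1 A2 hsum12
      have h1 := hle A1
      have h2 := hle A2
      have h3 : φ (cutVector C4 A1) + φ (cutVector C4 A2) = 2*c := by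
        rw [← map_add, hsum12, hφone]
      linarith
    have hcomp1 : cutVector C4 ({1} : Set (Fin 4)) + cutVector C4 ({3} : Set (Fin 4))
        = (fun _ => (1:ℝ)) := by
      funext e
      rcases C4_edge_cases e with rfl | rfl | rfl | rfl <;>
        · simp only [Pi.add_apply]
          norm_num (config := {decide := true}) [cv4_ec1, cv4_ec2, cv4_ec3, cv4_ec4, Set.mem_singleton_iff]
    have hcomp3 : cutVector C4 ({1,2} : Set (Fin 4)) + cutVector C4 ({0,1} : Set (Fin 4))
        = (fun _ => (1:ℝ)) := by
      funext e
      rcases C4_edge_cases e with rfl | rfl | rfl | rfl <;>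
        · simp only [Pi.add_apply]
          norm_num (config := {decide := true}) [cv4_ec1, cv4_ec2, cv4_ec3, cv4_ec4, Set.mem_insert_iff,
            Set.mem_singleton_iff]
    have hcomp4 : cutVector C4 ({0} : Set (Fin 4)) + cutVector C4 ({2} : Set (Fin 4))
        = (fun _ => (1:ℝ)) := by
      funext e
      rcases C4_edge_cases e with rfl | rfl | rfl | rfl <;>
        · simp only [Pi.add_apply]
          norm_num (config := {decide := true}) [cv4_ec1, cv4_ec2, cv4_ec3, cv4_ec4, Set.mem_singleton_iff]
    have hcomp0 : cutVector C4 (∅ : Set (Fin 4)) + cutVector C4 ({0,2} : Set (Fin 4))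
        = (fun _ => (1:ℝ)) := by
      funext e
      rcases C4_edge_cases e with rfl | rfl | rfl | rfl <;>
        · simp only [Pi.add_apply]
          norm_num (config := {decide := true}) [cv4_ec1, cv4_ec2, cv4_ec3, cv4_ec4, Set.mem_insert_iff,
            Set.mem_singleton_iff]
    -- c = 0
    have hzero : cutVector C4 (∅ : Set (Fin 4)) = 0 := by
      funext e
      rcases C4_edge_cases e with rfl | rfl | rfl | rfl <;>
        norm_num (config := {decide := true}) [cv4_ec1, cv4_ec2, cv4_ec3, cv4_ec4]
    have hc0 : c = 0 := by
      have h := pair ∅ {0,2} hcomp0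
      rw [hzero, map_zero] at h
      linarith
    have hw1 : φ (cutVector C4 ({1} : Set (Fin 4))) = 0 := by
      have := pair {1} {3} hcomp1; rw [hc0] at this; exact this
    have hw2 : φ (cutVector C4 ({3} : Set (Fin 4))) = 0 := by
      have := pair {3} {1} (by rw [add_comm]; exact hcomp1); rw [hc0] at this; exact this
    have hw3 : φ (cutVector C4 ({1,2} : Set (Fin 4))) = 0 := by
      have := pair {1,2} {0,1} hcomp3; rw [hc0] at this; exact this
    have hw4 : φ (cutVector C4 ({0} : Set (Fin 4))) = 0 := by
      have := pair {0} {2} hcomp4; rw [hc0] at this; exact this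
    -- hence φ = 0, contradiction
    apply hφ0
    have hne12 : ec1 ≠ ec2 := by intro h; exact absurd (congrArg Subtype.val h) (by decide)
    have hne13 : ec1 ≠ ec3 := by intro h; exact absurd (congrArg Subtype.val h) (by decide)
    have hne14 : ec1 ≠ ec4 := by intro h; exact absurd (congrArg Subtype.val h) (by decide)
    have hne23 : ec2 ≠ ec3 := by intro h; exact absurd (congrArg Subtype.val h) (by decide)
    have hne24 : ec2 ≠ ec4 := by intro h; exact absurd (congrArg Subtype.val h) (by decide)
    have hne34 : ec3 ≠ ec4 := by intro h; exact absurd (congrArg Subtype.val h) (by decide)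
    have hbasis1 : (fun e : ↥C4.edgeSet => if e = ec1 then (1:ℝ) else 0)
        = (-(1:ℝ)/2) • cutVector C4 ({3} : Set (Fin 4))
          + (1/2:ℝ) • cutVector C4 ({1,2} : Set (Fin 4))
          + (1/2:ℝ) • cutVector C4 ({0} : Set (Fin 4)) := by
      funext e
      rcases C4_edge_cases e with rfl | rfl | rfl | rfl <;>
        · simp only [Pi.add_apply, Pi.smul_apply, smul_eq_mul]
          norm_num (config := {decide := true}) [cv4_ec1, cv4_ec2, cv4_ec3, cv4_ec4, Set.mem_insert_iff,
            Set.mem_singleton_iff, hne12, hne13, hne14,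
            Ne.symm hne12, Ne.symm hne13, Ne.symm hne14]
    have hbasis2 : (fun e : ↥C4.edgeSet => if e = ec2 then (1:ℝ) else 0)
        = cutVector C4 ({1} : Set (Fin 4))
          + (1/2:ℝ) • cutVector C4 ({3} : Set (Fin 4))
          + (-(1:ℝ)/2) • cutVector C4 ({1,2} : Set (Fin 4))
          + (-(1:ℝ)/2) • cutVector C4 ({0} : Set (Fin 4)) := by
      funext e
      rcases C4_edge_cases e with rfl | rfl | rfl | rfl <;>
        · simp only [Pi.add_apply, Pi.smul_apply, smul_eq_mul]
          norm_num (config := {decide := true}) [cv4_ec1, cv4_ec2, cv4_ec3, cv4_ec4, Set.mem_insert_iff,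
            Set.mem_singleton_iff, hne12, hne23, hne24,
            Ne.symm hne12, Ne.symm hne23, Ne.symm hne24]
    have hbasis3 : (fun e : ↥C4.edgeSet => if e = ec3 then (1:ℝ) else 0)
        = (1/2:ℝ) • cutVector C4 ({3} : Set (Fin 4))
          + (1/2:ℝ) • cutVector C4 ({1,2} : Set (Fin 4))
          + (-(1:ℝ)/2) • cutVector C4 ({0} : Set (Fin 4)) := by
      funext e
      rcases C4_edge_cases e with rfl | rfl | rfl | rfl <;>
        · simp only [Pi.add_apply, Pi.smul_apply, smul_eq_mul]
          norm_num (config := {decide := true}) [cv4_ec1, cv4_ec2, cv4_ec3, cv4_ec4, Set.mem_insert_iff,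
            Set.mem_singleton_iff, hne13, hne23, hne34,
            Ne.symm hne13, Ne.symm hne23, Ne.symm hne34]
    have hbasis4 : (fun e : ↥C4.edgeSet => if e = ec4 then (1:ℝ) else 0)
        = (1/2:ℝ) • cutVector C4 ({3} : Set (Fin 4))
          + (-(1:ℝ)/2) • cutVector C4 ({1,2} : Set (Fin 4))
          + (1/2:ℝ) • cutVector C4 ({0} : Set (Fin 4)) := by
      funext e
      rcases C4_edge_cases e with rfl | rfl | rfl | rfl <;>
        · simp only [Pi.add_apply, Pi.smul_apply, smul_eq_mul]
          norm_num (config := {decide := true}) [cv4_ec1, cv4_ec2, cv4_ec3, cv4_ec4, Set.mem_insert_iff,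
            Set.mem_singleton_iff, hne14, hne24, hne34,
            Ne.symm hne14, Ne.symm hne24, Ne.symm hne34]
    have hφb1 : φ (fun e : ↥C4.edgeSet => if e = ec1 then (1:ℝ) else 0) = 0 := by
      rw [hbasis1, map_add, map_add, map_smul, map_smul, map_smul, hw2, hw3, hw4]
      simp
    have hφb2 : φ (fun e : ↥C4.edgeSet => if e = ec2 then (1:ℝ) else 0) = 0 := by
      rw [hbasis2, map_add, map_add, map_add, map_smul, map_smul, map_smul, hw1, hw2, hw3, hw4]
      simp
    have hφb3 : φ (fun e : ↥C4.edgeSet => if e = ec3 then (1:ℝ) else 0) = 0 := by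
      rw [hbasis3, map_add, map_add, map_smul, map_smul, map_smul, hw2, hw3, hw4]
      simp
    have hφb4 : φ (fun e : ↥C4.edgeSet => if e = ec4 then (1:ℝ) else 0) = 0 := by
      rw [hbasis4, map_add, map_add, map_smul, map_smul, map_smul, hw2, hw3, hw4]
      simp
    apply LinearMap.ext
    intro x
    have hdecx : x = x ec1 • (fun e : ↥C4.edgeSet => if e = ec1 then (1:ℝ) else 0)
        + x ec2 • (fun e : ↥C4.edgeSet => if e = ec2 then (1:ℝ) else 0)
        + x ec3 • (fun e : ↥C4.edgeSet => if e = ec3 then (1:ℝ) else 0)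
        + x ec4 • (fun e : ↥C4.edgeSet => if e = ec4 then (1:ℝ) else 0) := by
      funext e
      rcases C4_edge_cases e with rfl | rfl | rfl | rfl <;>
        simp [hne12, hne13, hne14, hne23, hne24, hne34,
          Ne.symm hne12, Ne.symm hne13, Ne.symm hne14,
          Ne.symm hne23, Ne.symm hne24, Ne.symm hne34]
    show φ x = 0
    conv_lhs => rw [hdecx]
    rw [map_add, map_add, map_add, map_smul, map_smul, map_smul, map_smul,
      hφb1, hφb2, hφb3, hφb4]
    simp


end CutPaper
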